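/- arXiv:math/0510612 — 5 statements merged into one kernel-verified Lean document; each statement's English description precedes it below -/
import Mathlib

section
/- Let ξ₁,…,ξₙ be independent standard Gaussian random variables, let 1 ≤ k ≤ n/2 be an integer, and let 0 < ε < 1/2. Define α⁺ and α⁻ by F(α⁺) = (1+ε)k/n and F(α⁻) = (1-ε)k/n, where F is the standard Gaussian CDF. Then P{ω_k < α⁻} ≤ exp(-ε²k/3) and P{ω_k > α⁺} ≤ exp(-ε²k/3), where ω_k is the k-th order statistic. -/
/-!
The `k`-th order statistic lies in a lower set `s` (here `(-∞, α)` or `(-∞, α]`) iff at least `k`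
of the `ξ i` lie in `s`. So both events are tail events of a sum of `n` independent indicators of
events of probability `p = F(α±) = (1 ± ε) k / n`, and the Chernoff bound with `t = ± log (1 + ε)`
applies. It gives `exp (-(ε² k) / 3)` because `ε - 2ε²/3 ≤ log (1 + ε) ≤ ε - ε²/3` for
`0 ≤ ε ≤ 1/2`.
-/

open MeasureTheory ProbabilityTheory

/-- The `k`-th order statistic (1-based): the `k`-th smallest among the values
`v 0, …, v (n-1)`. -/
noncomputable def orderStat {n : ℕ} (v : Fin n → ℝ) (k : ℕ) : ℝ :=
  ((List.ofFn v).insertionSort (· ≤ ·))[k - 1]!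


/-- The standard Gaussian cumulative distribution function. -/
noncomputable def stdGaussCDF (t : ℝ) : ℝ :=
  (Real.sqrt (2 * Real.pi))⁻¹ * ∫ τ in Set.Iic t, Real.exp (-τ ^ 2 / 2)

open Finset Real

theorem List.Pairwise.getElem_mem_iff_lt_countP {α : Type*} [Preorder α] {l : List α}
    (hl : l.Pairwise (· ≤ ·)) {s : Set α} [DecidablePred (· ∈ s)] (hs : IsLowerSet s)
    {i : ℕ} (hi : i < l.length) : l[i] ∈ s ↔ i < l.countP (· ∈ s) := by
  have hsorted := List.pairwise_iff_getElem.mp hl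
  constructor
  · intro h
    have htake : (l.take (i + 1)).countP (· ∈ s) = i + 1 := by
      rw [List.countP_eq_length.mpr, List.length_take]
      · omega
      intro x hx
      obtain ⟨j, hj, rfl⟩ := List.mem_take_iff_getElem.mp hx
      have hji : j ≤ i := by omega
      rcases hji.eq_or_lt with rfl | hji
      · simpa using h
      · simpa using hs (hsorted j i _ hi hji) h
    have := (List.take_sublist (i + 1) l).countP_le (p := (· ∈ s))
    omega
  · intro h
    by_contra hnot
    have hdrop : (l.drop i).countP (· ∈ s) = 0 := by
      refine List.countP_eq_zero.mpr fun x hx hxs => hnot ?_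
      obtain ⟨j, hj, rfl⟩ := List.mem_iff_getElem.mp hx
      rw [List.getElem_drop] at hxs
      rcases Nat.eq_zero_or_pos j with rfl | hj0
      · simpa using hxs
      · exact hs (hsorted i (i + j) hi _ (by omega)) (by simpa using hxs)
    have := List.countP_append (p := (· ∈ s)) (l₁ := l.take i) (l₂ := l.drop i)
    rw [List.take_append_drop, hdrop] at this
    have := (List.countP_le_length (p := (· ∈ s))).trans (List.length_take_le i l)
    omega

theorem List.countP_ofFn {α : Type*} {n : ℕ} (v : Fin n → α) (p : α → Bool) :
    (List.ofFn v).countP p = #{i | p (v i)} := by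
  rw [List.ofFn_eq_map, List.countP_map, List.countP_eq_length_filter, Fin.univ_def]
  simp [Finset.filter, Finset.card, Function.comp_def]

theorem orderStat_mem_iff_le_card {n : ℕ} (v : Fin n → ℝ) {k : ℕ} (hk1 : 1 ≤ k) (hkn : k ≤ n)
    {s : Set ℝ} [DecidablePred (· ∈ s)] (hs : IsLowerSet s) :
    orderStat v k ∈ s ↔ k ≤ #{i | v i ∈ s} := by
  set l := (List.ofFn v).insertionSort (· ≤ ·)
  have hi : k - 1 < l.length := by simp [l]; omega
  have hsorted : l.Pairwise (· ≤ ·) := List.pairwise_insertionSort _ _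
  have key := hsorted.getElem_mem_iff_lt_countP hs hi
  rw [(List.perm_insertionSort _ _).countP_eq, List.countP_ofFn] at key
  rw [orderStat, getElem!_pos l _ hi, key]
  simp only [decide_eq_true_eq]
  omega

theorem ProbabilityTheory.iIndepFun.iIndepSet_preimage {Ω ι β : Type*} [MeasurableSpace Ω]
    {μ : Measure Ω} [MeasurableSpace β] {X : ι → Ω → β} (h : iIndepFun X μ) {s : Set β}
    (hs : MeasurableSet s) : iIndepSet (fun i => X i ⁻¹' s) μ :=
  (iIndepSet_iff_iIndep _ _).2 <| iIndep_of_iIndep_of_le ((iIndepFun_iff_iIndep _ _ _).1 h)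
    fun _ => MeasurableSpace.generateFrom_le <| by rintro _ rfl; exact ⟨s, hs, rfl⟩

section Chernoff

theorem exp_mul_indicator_one {Ω : Type*} (t : ℝ) (A : Set Ω) :
    (fun ω => exp (t * A.indicator (fun _ => 1) ω)) =
      fun ω => 1 + A.indicator (fun _ => exp t - 1) ω := by
  ext ω
  by_cases h : ω ∈ A <;> simp [h]

variable {Ω ι : Type*} [MeasurableSpace Ω] {μ : Measure Ω} [IsProbabilityMeasure μ]

theorem integrable_exp_mul_indicator_one {A : Set Ω} (hA : MeasurableSet A) (t : ℝ) :
    Integrable (fun ω => exp (t * A.indicator (fun _ => 1) ω)) μ := by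
  rw [exp_mul_indicator_one]
  exact (integrable_const 1).add ((integrable_const _).indicator hA)

theorem mgf_indicator_one {A : Set Ω} (hA : MeasurableSet A) (t : ℝ) :
    mgf (A.indicator (fun _ => 1)) μ t = 1 + μ.real A * (exp t - 1) := by
  rw [mgf, exp_mul_indicator_one, integral_add (integrable_const 1)
    ((integrable_const _).indicator hA), integral_indicator_const _ hA]
  simp [mul_comm]

variable [Fintype ι] {A : ι → Set Ω}

theorem mgf_sum_indicator_one_le (hA : iIndepSet A μ) (hAm : ∀ i, MeasurableSet (A i))
    (t : ℝ) :
    mgf (∑ i, (A i).indicator (fun _ => 1)) μ t ≤ exp ((∑ i, μ.real (A i)) * (exp t - 1)) := by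
  rw [hA.iIndepFun_indicator.mgf_sum (fun i => measurable_one.indicator (hAm i)), sum_mul,
    exp_sum]
  refine prod_le_prod (fun i _ => mgf_nonneg) fun i _ => ?_
  rw [mgf_indicator_one (hAm i)]
  linarith [add_one_le_exp (μ.real (A i) * (exp t - 1))]

theorem integrable_exp_mul_sum_indicator_one (hA : iIndepSet A μ)
    (hAm : ∀ i, MeasurableSet (A i)) (t : ℝ) :
    Integrable (fun ω => exp (t * (∑ i, (A i).indicator (fun _ => 1)) ω)) μ :=
  hA.iIndepFun_indicator.integrable_exp_mul_sum (fun i => measurable_const.indicator (hAm i))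
    fun i _ => integrable_exp_mul_indicator_one (hAm i) t

theorem measureReal_le_sum_indicator_one_le (hA : iIndepSet A μ)
    (hAm : ∀ i, MeasurableSet (A i)) {t : ℝ} (ht : 0 ≤ t) (c : ℝ) :
    μ.real {ω | c ≤ (∑ i, (A i).indicator (fun _ => 1)) ω} ≤
      exp (-t * c + (∑ i, μ.real (A i)) * (exp t - 1)) := by
  rw [exp_add]
  refine (measure_ge_le_exp_mul_mgf c ht (integrable_exp_mul_sum_indicator_one hA hAm t)).trans ?_
  gcongr
  exact mgf_sum_indicator_one_le hA hAm t

theorem measureReal_sum_indicator_one_le_le (hA : iIndepSet A μ)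
    (hAm : ∀ i, MeasurableSet (A i)) {t : ℝ} (ht : t ≤ 0) (c : ℝ) :
    μ.real {ω | (∑ i, (A i).indicator (fun _ => 1)) ω ≤ c} ≤
      exp (-t * c + (∑ i, μ.real (A i)) * (exp t - 1)) := by
  rw [exp_add]
  refine (measure_le_le_exp_mul_mgf c ht (integrable_exp_mul_sum_indicator_one hA hAm t)).trans ?_
  gcongr
  exact mgf_sum_indicator_one_le hA hAm t

theorem measure_le_sum_indicator_one_le_exp (hA : iIndepSet A μ)
    (hAm : ∀ i, MeasurableSet (A i)) {k ε : ℝ} (hk : 0 ≤ k) (hε : 0 ≤ ε)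
    (hmean : ∑ i, μ.real (A i) = (1 - ε) * k) :
    μ {ω | k ≤ (∑ i, (A i).indicator (fun _ => 1)) ω} ≤
      ENNReal.ofReal (exp (-(ε ^ 2 * k) / 3)) := by
  have hlog : ε - 2 * ε ^ 2 / 3 ≤ log (1 + ε) := by
    refine le_trans ?_ (le_log_one_add_of_nonneg hε)
    rw [le_div_iff₀ (by linarith)]
    nlinarith [pow_nonneg hε 3]
  refine (ENNReal.le_ofReal_iff_toReal_le (measure_ne_top _ _) (exp_nonneg _)).2 ?_
  refine (measureReal_le_sum_indicator_one_le hA hAm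
    (log_nonneg (by linarith : (1 : ℝ) ≤ 1 + ε)) k).trans ?_
  rw [exp_log (by linarith), hmean, exp_le_exp]
  nlinarith [mul_le_mul_of_nonneg_left hlog hk]

theorem measure_sum_indicator_one_le_le_exp (hA : iIndepSet A μ)
    (hAm : ∀ i, MeasurableSet (A i)) {k ε : ℝ} (hk : 0 ≤ k) (hε0 : 0 ≤ ε) (hε1 : ε ≤ 1 / 2)
    (hmean : ∑ i, μ.real (A i) = (1 + ε) * k) :
    μ {ω | (∑ i, (A i).indicator (fun _ => 1)) ω ≤ k} ≤
      ENNReal.ofReal (exp (-(ε ^ 2 * k) / 3)) := by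
  have hlog : log (1 + ε) ≤ ε - ε ^ 2 / 3 := by
    rw [log_le_iff_le_exp (by linarith)]
    refine le_trans ?_ (quadratic_le_exp_of_nonneg (by nlinarith))
    nlinarith [mul_nonneg (sq_nonneg ε) (by linarith : 0 ≤ 1 / 2 - ε), pow_nonneg hε0 4]
  have hdrift : (1 + ε) * k * ((1 + ε)⁻¹ - 1) = -(ε * k) := by
    field_simp
    ring
  refine (ENNReal.le_ofReal_iff_toReal_le (measure_ne_top _ _) (exp_nonneg _)).2 ?_
  refine (measureReal_sum_indicator_one_le_le hA hAm
    (neg_nonpos.2 (log_nonneg (by linarith : (1 : ℝ) ≤ 1 + ε))) k).trans ?_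
  rw [exp_neg, exp_log (by linarith), hmean, hdrift, exp_le_exp]
  nlinarith [mul_le_mul_of_nonneg_left hlog hk]

end Chernoff

theorem sum_measureReal_preimage_of_map_eq {Ω ι β : Type*} [MeasurableSpace Ω]
    {μ : Measure Ω} [Fintype ι] [MeasurableSpace β] {X : ι → Ω → β}
    (hX : ∀ i, Measurable (X i)) {ν : Measure β} (hν : ∀ i, μ.map (X i) = ν) {s : Set β}
    (hs : MeasurableSet s) : ∑ i, μ.real (X i ⁻¹' s) = Fintype.card ι * ν.real s := by
  simp [← map_measureReal_apply (hX _) hs, hν]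

theorem sum_indicator_one_apply_eq_card {Ω ι : Type*} [Fintype ι] (A : ι → Set Ω) (ω : Ω)
    [DecidablePred (ω ∈ A ·)] :
    (∑ i, (A i).indicator (fun _ => (1 : ℝ))) ω = #{i | ω ∈ A i} := by
  simp [Finset.sum_apply, Set.indicator_apply, Finset.sum_boole]

theorem orderStat_mem_iff_le_sum_indicator_one {Ω : Type*} {n : ℕ} (X : Fin n → Ω → ℝ)
    (ω : Ω) {k : ℕ} (hk1 : 1 ≤ k) (hkn : k ≤ n) {s : Set ℝ} (hs : IsLowerSet s) :
    orderStat (fun i => X i ω) k ∈ s ↔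
      (k : ℝ) ≤ (∑ i, (X i ⁻¹' s).indicator (fun _ => 1)) ω := by
  classical
  rw [orderStat_mem_iff_le_card _ hk1 hkn hs, sum_indicator_one_apply_eq_card, Nat.cast_le]
  rfl

theorem measureReal_gaussianReal_Iic (a : ℝ) :
    (gaussianReal 0 1).real (Set.Iic a) = stdGaussCDF a := by
  rw [measureReal_def, gaussianReal_apply_eq_integral 0 one_ne_zero, ENNReal.toReal_ofReal
    (setIntegral_nonneg measurableSet_Iic fun x _ => gaussianPDFReal_nonneg 0 1 x),
    stdGaussCDF, ← integral_const_mul]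
  congr 1 with x
  simp [gaussianPDFReal]

theorem measureReal_gaussianReal_Iio (a : ℝ) :
    (gaussianReal 0 1).real (Set.Iio a) = stdGaussCDF a := by
  rw [← measureReal_gaussianReal_Iic, measureReal_congr (Iio_ae_eq_Iic' _)]
  exact gaussianReal_absolutelyContinuous 0 one_ne_zero Real.volume_singleton

theorem stmt4 {Ω : Type*} [MeasureSpace Ω] [IsProbabilityMeasure (ℙ : Measure Ω)]
    (n : ℕ) (ξ : Fin n → Ω → ℝ)
    (hmeas : ∀ i, Measurable (ξ i))
    (hindep : iIndepFun ξ ℙ)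
    (hgauss : ∀ i, Measure.map (ξ i) ℙ = gaussianReal 0 1)
    (k : ℕ) (hk1 : 1 ≤ k) (hkn : 2 * k ≤ n)
    (ε : ℝ) (hε0 : 0 < ε) (hε1 : ε < 1 / 2)
    (αp αm : ℝ)
    (hαp : stdGaussCDF αp = (1 + ε) * k / n)
    (hαm : stdGaussCDF αm = (1 - ε) * k / n) :
    ℙ {ω | orderStat (fun i => ξ i ω) k < αm} ≤
        ENNReal.ofReal (Real.exp (-(ε ^ 2 * k) / 3)) ∧
    ℙ {ω | αp < orderStat (fun i => ξ i ω) k} ≤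
        ENNReal.ofReal (Real.exp (-(ε ^ 2 * k) / 3)) := by
  have hn : (n : ℝ) ≠ 0 := Nat.cast_ne_zero.2 (by omega)
  constructor
  · have hmean : ∑ i, (ℙ : Measure Ω).real (ξ i ⁻¹' Set.Iio αm) = (1 - ε) * k := by
      rw [sum_measureReal_preimage_of_map_eq hmeas hgauss measurableSet_Iio,
        measureReal_gaussianReal_Iio, hαm, Fintype.card_fin]
      field_simp
    calc ℙ {ω | orderStat (fun i => ξ i ω) k < αm}
        = ℙ {ω | (k : ℝ) ≤ (∑ i, (ξ i ⁻¹' Set.Iio αm).indicator (fun _ => 1)) ω} := by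
          congr 1 with ω
          exact orderStat_mem_iff_le_sum_indicator_one ξ ω hk1 (by omega) (isLowerSet_Iio αm)
      _ ≤ _ := measure_le_sum_indicator_one_le_exp (hindep.iIndepSet_preimage measurableSet_Iio)
          (fun i => hmeas i measurableSet_Iio) k.cast_nonneg hε0.le hmean
  · have hmean : ∑ i, (ℙ : Measure Ω).real (ξ i ⁻¹' Set.Iic αp) = (1 + ε) * k := by
      rw [sum_measureReal_preimage_of_map_eq hmeas hgauss measurableSet_Iic,
        measureReal_gaussianReal_Iic, hαp, Fintype.card_fin]
      field_simp
    calc ℙ {ω | αp < orderStat (fun i => ξ i ω) k}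
        ≤ ℙ {ω | (∑ i, (ξ i ⁻¹' Set.Iic αp).indicator (fun _ => 1)) ω ≤ (k : ℝ)} := by
          refine measure_mono fun ω (hω : αp < orderStat (fun i => ξ i ω) k) => ?_
          exact (not_le.1 ((orderStat_mem_iff_le_sum_indicator_one ξ ω hk1 (by omega)
            (isLowerSet_Iic αp)).not.1 hω.not_ge)).le
      _ ≤ _ := measure_sum_indicator_one_le_le_exp (hindep.iIndepSet_preimage measurableSet_Iic)
          (fun i => hmeas i measurableSet_Iic) k.cast_nonneg hε0.le hε1.le hmean
end

section
/- Let F be the standard Gaussian CDF, let n ≥ 2, let 1 ≤ k ≤ n/2 be an integer, and let 0 < ε < 1/2. Define α⁺ and α⁻ by F(α⁺) = (1+ε)k/n and F(α⁻) = (1-ε)k/n. Then 0 ≤ α⁺ - α⁻ ≤ ε√(8π)/(1-ε). -/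
/-!
With φ(τ) = exp(-τ²/2), every point x satisfies `min (F x) (1 - F x) ≤ φ x / 2`: for
`τ ≤ x ≤ 0` one has `τ² ≥ x² + (τ - x)²`, so the left tail at `x` is at most `φ x` times a
half-Gaussian integral, and the right tail follows by symmetry. As `F` is monotone, on
`[α⁻, α⁺]` this gives `φ ≥ 2 min (F α⁻) (1 - F α⁺) ≥ 2 (1 - ε) k / n`, while the integral of `φ`
over that interval is `√(2π) (F α⁺ - F α⁻) = √(2π) · 2 ε k / n`.
-/

open MeasureTheory

open Real Set

lemma exp_neg_sq_div_two_eq (τ : ℝ) : exp (-τ ^ 2 / 2) = exp (-(1 / 2) * τ ^ 2) := by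
  ring_nf

lemma integrable_exp_neg_sq_div_two : Integrable fun τ : ℝ => exp (-τ ^ 2 / 2) := by
  simpa only [exp_neg_sq_div_two_eq] using integrable_exp_neg_mul_sq (b := 1 / 2) (by norm_num)

lemma integral_exp_neg_sq_div_two : ∫ τ : ℝ, exp (-τ ^ 2 / 2) = √(2 * π) := by
  simpa only [exp_neg_sq_div_two_eq, div_div_eq_mul_div, div_one, mul_comm π]
    using integral_gaussian (1 / 2)

lemma setIntegral_Iic_exp_neg_sq_div_two_add_neg (x : ℝ) :
    (∫ τ in Iic x, exp (-τ ^ 2 / 2)) + ∫ τ in Iic (-x), exp (-τ ^ 2 / 2) = √(2 * π) := by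
  rw [← integral_comp_neg_Ioi, ← integral_exp_neg_sq_div_two,
    ← integral_add_compl (measurableSet_Iic (a := x)) integrable_exp_neg_sq_div_two, compl_Iic]
  simp only [even_two, Even.neg_pow]

lemma stdGaussCDF_add_stdGaussCDF_neg (x : ℝ) : stdGaussCDF x + stdGaussCDF (-x) = 1 := by
  rw [stdGaussCDF, stdGaussCDF, ← mul_add, setIntegral_Iic_exp_neg_sq_div_two_add_neg,
    inv_mul_cancel₀ (by positivity)]

lemma stdGaussCDF_monotone : Monotone stdGaussCDF := fun a b hab => by
  unfold stdGaussCDF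
  gcongr ?_ * ?_
  exact setIntegral_mono_set integrable_exp_neg_sq_div_two.integrableOn
    (.of_forall fun τ => (exp_pos _).le) (.of_forall (Iic_subset_Iic.mpr hab))

lemma setIntegral_Iic_exp_neg_sub_sq_div_two (x : ℝ) :
    ∫ τ in Iic x, exp (-(τ - x) ^ 2 / 2) = √(2 * π) / 2 := by
  have hshift := (measurePreserving_add_right volume x).setIntegral_preimage_emb
    (measurableEmbedding_addRight x) (fun τ => exp (-(τ - x) ^ 2 / 2)) (Iic x)
  have h0 := setIntegral_Iic_exp_neg_sq_div_two_add_neg 0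
  rw [neg_zero] at h0
  simp only [preimage_add_const_Iic, sub_self, add_sub_cancel_right] at hshift
  linarith

lemma stdGaussCDF_le_of_nonpos {x : ℝ} (hx : x ≤ 0) : stdGaussCDF x ≤ exp (-x ^ 2 / 2) / 2 := by
  have hle : ∫ τ in Iic x, exp (-τ ^ 2 / 2) ≤
      ∫ τ in Iic x, exp (-x ^ 2 / 2) * exp (-(τ - x) ^ 2 / 2) := by
    refine setIntegral_mono_on integrable_exp_neg_sq_div_two.integrableOn
      ((integrable_exp_neg_sq_div_two.comp_sub_right x).const_mul _).integrableOn
      measurableSet_Iic fun τ (hτ : τ ≤ x) => ?_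
    rw [← exp_add, exp_le_exp]
    nlinarith [mul_nonneg (neg_nonneg.mpr hx) (sub_nonneg.mpr hτ)]
  rw [integral_const_mul, setIntegral_Iic_exp_neg_sub_sq_div_two] at hle
  rw [stdGaussCDF, inv_mul_le_iff₀ (by positivity)]
  linarith

lemma min_stdGaussCDF_one_sub_le (x : ℝ) :
    min (stdGaussCDF x) (1 - stdGaussCDF x) ≤ exp (-x ^ 2 / 2) / 2 := by
  rcases le_total x 0 with hx | hx
  · exact (min_le_left _ _).trans (stdGaussCDF_le_of_nonpos hx)
  · have h := stdGaussCDF_le_of_nonpos (neg_nonpos.mpr hx)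
    rw [neg_sq] at h
    refine (min_le_right _ _).trans ?_
    rwa [← stdGaussCDF_add_stdGaussCDF_neg x, add_sub_cancel_left]

lemma stdGaussCDF_sub_stdGaussCDF {a b : ℝ} (hab : a ≤ b) :
    stdGaussCDF b - stdGaussCDF a = (√(2 * π))⁻¹ * ∫ τ in Ioc a b, exp (-τ ^ 2 / 2) := by
  rw [stdGaussCDF, stdGaussCDF, ← mul_sub, ← intervalIntegral.integral_of_le hab,
    intervalIntegral.integral_Iic_sub_Iic integrable_exp_neg_sq_div_two.integrableOn
      integrable_exp_neg_sq_div_two.integrableOn]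

lemma mul_sub_le_stdGaussCDF_sub {a b : ℝ} (hab : a ≤ b) :
    2 * min (stdGaussCDF a) (1 - stdGaussCDF b) * (b - a) ≤
      √(2 * π) * (stdGaussCDF b - stdGaussCDF a) := by
  have hlow : ∀ τ ∈ Ioc a b, 2 * min (stdGaussCDF a) (1 - stdGaussCDF b) ≤ exp (-τ ^ 2 / 2) :=
    fun τ hτ => calc
      _ ≤ 2 * min (stdGaussCDF τ) (1 - stdGaussCDF τ) := by
        gcongr 2 * min ?_ (1 - ?_) <;> apply stdGaussCDF_monotone
        exacts [hτ.1.le, hτ.2]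
      _ ≤ exp (-τ ^ 2 / 2) := by linarith [min_stdGaussCDF_one_sub_le τ]
  have h := setIntegral_ge_of_const_le_real measurableSet_Ioc (by simp) hlow
    integrable_exp_neg_sq_div_two.integrableOn
  rw [Real.volume_real_Ioc_of_le hab] at h
  rw [stdGaussCDF_sub_stdGaussCDF hab, mul_inv_cancel_left₀ (by positivity)]
  linarith

theorem stmt5_general (n k : ℕ) (hk1 : 1 ≤ k) (hkn : 2 * k ≤ n)
    (ε : ℝ) (hε0 : 0 < ε) (hε1 : ε < 1 / 2)
    (αp αm : ℝ)
    (hαp : stdGaussCDF αp = (1 + ε) * k / n)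
    (hαm : stdGaussCDF αm = (1 - ε) * k / n) :
    0 ≤ αp - αm ∧ αp - αm ≤ ε * Real.sqrt (8 * Real.pi) / (1 - ε) := by
  have hk : (1 : ℝ) ≤ k := by exact_mod_cast hk1
  have hkn : 2 * (k : ℝ) ≤ n := by exact_mod_cast hkn
  set K := (k : ℝ) / n
  have hK : 0 < K := div_pos (by linarith) (by linarith)
  have hK2 : 2 * K ≤ 1 := by rwa [← mul_div_assoc, div_le_one (by linarith)]
  rw [mul_div_assoc] at hαp hαm
  have hlt : αm < αp := stdGaussCDF_monotone.reflect_lt (by rw [hαp, hαm]; nlinarith)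
  have hmin : (1 - ε) * K ≤ min (stdGaussCDF αm) (1 - stdGaussCDF αp) := by
    rw [hαp, hαm]; exact le_min le_rfl (by linarith)
  have hgap : 2 * K * ((1 - ε) * (αp - αm)) ≤ 2 * K * (ε * √(2 * π)) := calc
    _ = 2 * ((1 - ε) * K) * (αp - αm) := by ring
    _ ≤ 2 * min (stdGaussCDF αm) (1 - stdGaussCDF αp) * (αp - αm) := by gcongr
    _ ≤ √(2 * π) * (stdGaussCDF αp - stdGaussCDF αm) := mul_sub_le_stdGaussCDF_sub hlt.le
    _ = 2 * K * (ε * √(2 * π)) := by rw [hαp, hαm]; ring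
  have h8 : √(8 * π) = 2 * √(2 * π) := by
    rw [show (8 : ℝ) * π = 2 ^ 2 * (2 * π) by ring, sqrt_mul' _ (by positivity),
      sqrt_sq zero_le_two]
  refine ⟨sub_nonneg.mpr hlt.le, ?_⟩
  rw [h8, le_div_iff₀ (by linarith)]
  nlinarith [le_of_mul_le_mul_left hgap (by positivity), sqrt_nonneg (2 * π)]

theorem stmt5 (n k : ℕ) (hn : 2 ≤ n) (hk1 : 1 ≤ k) (hkn : 2 * k ≤ n)
    (ε : ℝ) (hε0 : 0 < ε) (hε1 : ε < 1 / 2)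
    (αp αm : ℝ)
    (hαp : stdGaussCDF αp = (1 + ε) * k / n)
    (hαm : stdGaussCDF αm = (1 - ε) * k / n) :
    0 ≤ αp - αm ∧ αp - αm ≤ ε * Real.sqrt (8 * Real.pi) / (1 - ε) :=
  stmt5_general n k hk1 hkn ε hε0 hε1 αp αm hαp hαm
end

section
/- There is an absolute constant c such that for every n and every function f: ℝⁿ → ℝ that is positively homogeneous of degree 1 (f(λx) = λ f(x) for all λ ≥ 0) and square-integrable against the standard Gaussian measure μₙ, one has ∫_{ℝⁿ} f² dμₙ ≤ c ∫_B f² dμₙ, where B = {x ∈ ℝⁿ : ‖x‖ ≤ n} is the Euclidean ball of radius n. -/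
/-!
Scaling by `3` pushes the centred Gaussian of variance `1/9` forward to the standard one, and
the former has density `3ⁿ exp (-4‖y‖²)` with respect to the latter. Since `f²` is homogeneous of
degree 2, the mass of `f²` outside the ball of radius `n` becomes
`9 ∫_{‖y‖ > n/3} 3ⁿ exp (-4‖y‖²) f² dμ`. The density is at most `3` on the shell
`n/3 < ‖y‖ ≤ n` and at most `1/18` outside the ball, so the outer mass `T` and the inner mass `B`
satisfy `T ≤ 27 B + T / 2`; as `T` is finite, `T ≤ 54 B` and the whole integral is at most `55 B`.
-/

open MeasureTheory ProbabilityTheory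

/-- The standard Gaussian probability measure on `ℝⁿ`. -/
noncomputable def stdGaussianMeasure (n : ℕ) : Measure (Fin n → ℝ) :=
  Measure.pi fun _ => gaussianReal 0 1

open Real
open scoped ENNReal NNReal

lemma lintegral_pi_prod_eq_prod {ι : Type*} [Fintype ι] {Ω : ι → Type*}
    [∀ i, MeasurableSpace (Ω i)] (μ : ∀ i, Measure (Ω i)) [∀ i, IsProbabilityMeasure (μ i)]
    {g : ∀ i, Ω i → ℝ≥0∞} (hg : ∀ i, Measurable (g i)) :
    ∫⁻ x, ∏ i, g i (x i) ∂Measure.pi μ = ∏ i, ∫⁻ y, g i y ∂μ i := by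
  rw [lintegral_prod_eq_prod_lintegral_of_indepFun _ _ (iIndepFun_pi fun i => (hg i).aemeasurable)
    fun i => (hg i).comp (measurable_pi_apply i)]
  exact Finset.prod_congr rfl fun i _ => (measurePreserving_eval μ i).lintegral_comp (hg i)

lemma pi_withDensity {ι : Type*} [Fintype ι] {Ω : ι → Type*}
    [∀ i, MeasurableSpace (Ω i)] (μ : ∀ i, Measure (Ω i)) [∀ i, IsProbabilityMeasure (μ i)]
    {g : ∀ i, Ω i → ℝ≥0∞} (hg : ∀ i, Measurable (g i))
    [∀ i, SigmaFinite ((μ i).withDensity (g i))] :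
    Measure.pi (fun i => (μ i).withDensity (g i)) =
      (Measure.pi μ).withDensity fun x => ∏ i, g i (x i) := by
  refine Measure.pi_eq fun s hs => ?_
  have hind : (Set.univ.pi s).indicator (fun x => ∏ i, g i (x i)) =
      fun x => ∏ i, (s i).indicator (g i) (x i) := by
    ext x
    by_cases hx : x ∈ Set.univ.pi s
    · rw [Set.indicator_of_mem hx]
      exact Finset.prod_congr rfl fun i _ => (Set.indicator_of_mem (hx i trivial) _).symm
    · obtain ⟨i, hi⟩ : ∃ i, x i ∉ s i := by simpa [Set.mem_univ_pi] using hx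
      rw [Set.indicator_of_notMem hx, Finset.prod_eq_zero (Finset.mem_univ i)
        (Set.indicator_of_notMem hi _)]
  rw [withDensity_apply _ (.univ_pi hs), ← lintegral_indicator (.univ_pi hs), hind,
    lintegral_pi_prod_eq_prod μ fun i => (hg i).indicator (hs i)]
  exact Finset.prod_congr rfl fun i _ => by
    rw [lintegral_indicator (hs i), withDensity_apply _ (hs i)]

lemma gaussianPDFReal_zero_inv_sq {c : ℝ≥0} (hc : c ≠ 0) (x : ℝ) :
    gaussianPDFReal 0 (c ^ 2)⁻¹ x =
      c * exp (-(((c : ℝ) ^ 2 - 1) / 2 * x ^ 2)) * gaussianPDFReal 0 1 x := by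
  have hc' : (0 : ℝ) < c := by positivity
  simp only [gaussianPDFReal, NNReal.coe_inv, NNReal.coe_pow, NNReal.coe_one, sub_zero, mul_one]
  rw [show 2 * π * ((c : ℝ) ^ 2)⁻¹ = (2 * π) / c ^ 2 by ring, sqrt_div' _ (by positivity),
    sqrt_sq hc'.le, inv_div, show -x ^ 2 / (2 * ((c : ℝ) ^ 2)⁻¹) =
      -(((c : ℝ) ^ 2 - 1) / 2 * x ^ 2) + -x ^ 2 / 2 by field_simp; ring, exp_add]
  ring

lemma gaussianReal_zero_inv_sq {c : ℝ≥0} (hc : c ≠ 0) :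
    gaussianReal 0 (c ^ 2)⁻¹ = (gaussianReal 0 1).withDensity
      fun x => ENNReal.ofReal (c * exp (-(((c : ℝ) ^ 2 - 1) / 2 * x ^ 2))) := by
  rw [gaussianReal_of_var_ne_zero _ (by positivity), gaussianReal_of_var_ne_zero _ one_ne_zero,
    ← withDensity_mul _ (measurable_gaussianPDF 0 1) (by fun_prop)]
  congr 1
  ext x
  simp only [gaussianPDF_def, Pi.mul_apply]
  rw [← ENNReal.ofReal_mul (gaussianPDFReal_nonneg 0 1 x),
    gaussianPDFReal_zero_inv_sq hc, mul_comm]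

lemma measurePreserving_const_mul_gaussianReal {c : ℝ≥0} (hc : c ≠ 0) :
    MeasurePreserving ((c : ℝ) * ·) (gaussianReal 0 (c ^ 2)⁻¹) (gaussianReal 0 1) := by
  refine ⟨measurable_const_mul _, ?_⟩
  rw [gaussianReal_map_const_mul, mul_zero]
  congr
  ext
  simp [hc]

theorem lintegral_stdGaussianMeasure_eq_lintegral_smul (n : ℕ) {c : ℝ≥0} (hc : c ≠ 0)
    {g : (Fin n → ℝ) → ℝ≥0∞} (hg : Measurable g) :
    ∫⁻ x, g x ∂stdGaussianMeasure n = ∫⁻ y, ENNReal.ofReal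
      ((c : ℝ) ^ n * exp (-(((c : ℝ) ^ 2 - 1) / 2 * ∑ i, y i ^ 2))) * g ((c : ℝ) • y)
        ∂stdGaussianMeasure n := by
  have hmp : MeasurePreserving (fun y : Fin n → ℝ => (c : ℝ) • y)
      (Measure.pi fun _ => gaussianReal 0 (c ^ 2)⁻¹) (stdGaussianMeasure n) :=
    measurePreserving_pi _ _ fun _ => measurePreserving_const_mul_gaussianReal hc
  have hdensity : ∀ y : Fin n → ℝ,
      ∏ i, ENNReal.ofReal (c * exp (-(((c : ℝ) ^ 2 - 1) / 2 * y i ^ 2))) =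
        ENNReal.ofReal ((c : ℝ) ^ n * exp (-(((c : ℝ) ^ 2 - 1) / 2 * ∑ i, y i ^ 2))) := by
    intro y
    rw [← ENNReal.ofReal_prod_of_nonneg fun i _ => by positivity, Finset.prod_mul_distrib,
      ← exp_sum, Finset.prod_const, Finset.card_univ, Fintype.card_fin, Finset.mul_sum,
      Finset.sum_neg_distrib]
  rw [← hmp.lintegral_comp hg]
  simp_rw [gaussianReal_zero_inv_sq hc]
  rw [pi_withDensity _ fun _ => by fun_prop, lintegral_withDensity_eq_lintegral_mul _
    (by fun_prop) (by fun_prop : Measurable fun y : Fin n → ℝ => g ((c : ℝ) • y))]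
  simp only [Pi.mul_apply, hdensity]
  rfl

lemma three_le_exp_four_thirds : (3 : ℝ) ≤ exp (4 / 3) := by
  have h1 : (1 : ℝ) + 1 / 3 ≤ exp (1 / 3) := by linarith [add_one_le_exp (1 / 3 : ℝ)]
  calc (3 : ℝ) ≤ 2.7182818283 * (1 + 1 / 3) := by norm_num
    _ ≤ exp 1 * exp (1 / 3) := by gcongr; exact exp_one_gt_d9.le
    _ = exp (4 / 3) := by rw [← exp_add]; norm_num

lemma fifty_four_le_exp_four : (54 : ℝ) ≤ exp 4 := by
  calc (54 : ℝ) ≤ 2.7182818283 ^ 4 := by norm_num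
    _ ≤ exp 1 ^ 4 := by gcongr; exact exp_one_gt_d9.le
    _ = exp 4 := by rw [← exp_nat_mul]; norm_num

lemma three_pow_mul_exp_le_three {n : ℕ} {s : ℝ} (hs : (n : ℝ) ^ 2 ≤ 9 * s) :
    3 ^ n * exp (-(4 * s)) ≤ 3 :=
  calc 3 ^ n * exp (-(4 * s)) ≤ exp (4 / 3) ^ n * exp (-(4 * s)) := by
        gcongr; exact three_le_exp_four_thirds
    _ = exp (4 / 3 * n - 4 * s) := by rw [← exp_nat_mul, ← exp_add]; ring_nf
    _ ≤ exp 1 := exp_le_exp.mpr (by nlinarith [sq_nonneg (2 / 3 * (n : ℝ) - 1)])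
    _ ≤ 3 := exp_one_lt_d9.le.trans (by norm_num)

lemma three_pow_mul_exp_le_inv_eighteen {n : ℕ} (hn : n ≠ 0) {s : ℝ} (hs : (n : ℝ) ^ 2 ≤ s) :
    3 ^ n * exp (-(4 * s)) ≤ 18⁻¹ := by
  have hn1 : (1 : ℝ) ≤ n := by exact_mod_cast Nat.one_le_iff_ne_zero.mpr hn
  have hbase : 3 * exp (-4) ≤ (18 : ℝ)⁻¹ := by
    rw [exp_neg, ← div_eq_mul_inv, div_le_iff₀ (exp_pos 4)]
    linarith [fifty_four_le_exp_four]
  calc 3 ^ n * exp (-(4 * s)) ≤ 3 ^ n * exp (n * (-4)) := by gcongr; nlinarith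
    _ = (3 * exp (-4)) ^ n := by rw [exp_nat_mul, mul_pow]
    _ ≤ (3 * exp (-4)) ^ 1 := pow_le_pow_of_le_one (by positivity)
          (hbase.trans (by norm_num)) (Nat.one_le_iff_ne_zero.mpr hn)
    _ ≤ 18⁻¹ := by rwa [pow_one]

/-- The Euclidean ball of radius `n` in `ℝⁿ`, written with the sum of squares because
`Fin n → ℝ` carries the sup norm. -/
def dimBall (n : ℕ) : Set (Fin n → ℝ) := {x | ∑ i, x i ^ 2 ≤ (n : ℝ) ^ 2}

lemma measurableSet_dimBall (n : ℕ) : MeasurableSet (dimBall n) :=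
  measurableSet_le (by fun_prop) measurable_const

lemma sum_sq_smul {n : ℕ} (c : ℝ) (y : Fin n → ℝ) : ∑ i, (c • y) i ^ 2 = c ^ 2 * ∑ i, y i ^ 2 := by
  simp only [Pi.smul_apply, smul_eq_mul, mul_pow, Finset.mul_sum]

lemma ofReal_mul_indicator_compl_dimBall_le {n : ℕ} {F : (Fin n → ℝ) → ℝ≥0∞}
    (hhom : ∀ y, F ((3 : ℝ) • y) = 9 * F y) (y : Fin n → ℝ) :
    ENNReal.ofReal (3 ^ n * exp (-(4 * ∑ i, y i ^ 2))) * (dimBall n)ᶜ.indicator F ((3 : ℝ) • y) ≤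
      (dimBall n).indicator (fun y => 27 * F y) y +
        (dimBall n)ᶜ.indicator (fun y => 2⁻¹ * F y) y := by
  by_cases h3y : (3 : ℝ) • y ∈ (dimBall n)ᶜ
  swap
  · simp [Set.indicator_of_notMem h3y]
  have hs : (n : ℝ) ^ 2 ≤ 9 * ∑ i, y i ^ 2 := by
    simp only [dimBall, Set.mem_compl_iff, Set.mem_ofPred_eq, not_le, sum_sq_smul] at h3y
    norm_num at h3y
    exact h3y.le
  rw [Set.indicator_of_mem h3y, hhom, ← mul_assoc]
  by_cases hy : y ∈ dimBall n
  · rw [Set.indicator_of_mem hy, Set.indicator_of_notMem (Set.notMem_compl_iff.mpr hy), add_zero]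
    gcongr
    rw [← ENNReal.ofReal_ofNat, ← ENNReal.ofReal_mul (by positivity), ← ENNReal.ofReal_ofNat 27]
    exact ENNReal.ofReal_le_ofReal (by linarith [three_pow_mul_exp_le_three hs])
  · rw [Set.indicator_of_notMem hy, Set.indicator_of_mem hy, zero_add]
    simp only [dimBall, Set.mem_ofPred_eq, not_le] at hy
    have hn : n ≠ 0 := by
      rintro rfl
      simp at hy
    gcongr
    rw [← ENNReal.ofReal_ofNat, ← ENNReal.ofReal_mul (by positivity), ← ENNReal.ofReal_ofNat 2,
      ← ENNReal.ofReal_inv_of_pos two_pos]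
    exact ENNReal.ofReal_le_ofReal (by linarith [three_pow_mul_exp_le_inv_eighteen hn hy.le])

lemma lintegral_compl_dimBall_le {n : ℕ} {F : (Fin n → ℝ) → ℝ≥0∞} (hF : Measurable F)
    (hhom : ∀ y, F ((3 : ℝ) • y) = 9 * F y) :
    ∫⁻ x in (dimBall n)ᶜ, F x ∂stdGaussianMeasure n ≤
      27 * ∫⁻ x in dimBall n, F x ∂stdGaussianMeasure n +
        2⁻¹ * ∫⁻ x in (dimBall n)ᶜ, F x ∂stdGaussianMeasure n := by
  have hB := measurableSet_dimBall n
  have hscale := lintegral_stdGaussianMeasure_eq_lintegral_smul n (c := 3) three_ne_zero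
    (hF.indicator hB.compl)
  rw [NNReal.coe_ofNat, show ((3 : ℝ) ^ 2 - 1) / 2 = 4 by norm_num] at hscale
  calc ∫⁻ x in (dimBall n)ᶜ, F x ∂stdGaussianMeasure n
      = ∫⁻ y, ENNReal.ofReal (3 ^ n * exp (-(4 * ∑ i, y i ^ 2))) *
          (dimBall n)ᶜ.indicator F ((3 : ℝ) • y) ∂stdGaussianMeasure n := by
        rw [← lintegral_indicator hB.compl, hscale]
    _ ≤ ∫⁻ y, (dimBall n).indicator (fun y => 27 * F y) y +
          (dimBall n)ᶜ.indicator (fun y => 2⁻¹ * F y) y ∂stdGaussianMeasure n :=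
        lintegral_mono (ofReal_mul_indicator_compl_dimBall_le hhom)
    _ = _ := by
        rw [lintegral_add_left ((hF.const_mul _).indicator hB), lintegral_indicator hB,
          lintegral_indicator hB.compl, lintegral_const_mul _ hF, lintegral_const_mul _ hF]

lemma ENNReal.le_two_mul_of_le_add_inv_two_mul {a b : ℝ≥0∞} (ha : a ≠ ∞) (h : a ≤ b + 2⁻¹ * a) :
    a ≤ 2 * b := by
  rw [← ENNReal.div_eq_inv_mul] at h
  nth_rewrite 1 [← ENNReal.add_halves a] at h
  have hhalf : a / 2 ≤ b := (ENNReal.add_le_add_iff_right (ENNReal.div_ne_top ha two_ne_zero)).mp h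
  calc a = a / 2 + a / 2 := (ENNReal.add_halves a).symm
    _ ≤ b + b := add_le_add hhalf hhalf
    _ = 2 * b := (two_mul b).symm

lemma lintegral_le_mul_setLIntegral_dimBall {n : ℕ} {F : (Fin n → ℝ) → ℝ≥0∞} (hF : Measurable F)
    (hhom : ∀ y, F ((3 : ℝ) • y) = 9 * F y) (hfin : ∫⁻ x, F x ∂stdGaussianMeasure n ≠ ∞) :
    ∫⁻ x, F x ∂stdGaussianMeasure n ≤ 55 * ∫⁻ x in dimBall n, F x ∂stdGaussianMeasure n := by
  set B := ∫⁻ x in dimBall n, F x ∂stdGaussianMeasure n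
  set T := ∫⁻ x in (dimBall n)ᶜ, F x ∂stdGaussianMeasure n
  have hT : T ≠ ∞ := ne_top_of_le_ne_top hfin (setLIntegral_le_lintegral _ _)
  have hTB : T ≤ 2 * (27 * B) :=
    ENNReal.le_two_mul_of_le_add_inv_two_mul hT (lintegral_compl_dimBall_le hF hhom)
  calc ∫⁻ x, F x ∂stdGaussianMeasure n = B + T :=
        (lintegral_add_compl F (measurableSet_dimBall n)).symm
    _ ≤ B + 2 * (27 * B) := by gcongr
    _ = 55 * B := by ring

theorem stmt7 :
    ∃ c : ℝ, 0 < c ∧ ∀ (n : ℕ) (f : (Fin n → ℝ) → ℝ), Measurable f →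
      (∀ (l : ℝ), 0 ≤ l → ∀ x, f (l • x) = l * f x) →
      Integrable (fun x => f x ^ 2) (stdGaussianMeasure n) →
      ∫ x, f x ^ 2 ∂(stdGaussianMeasure n) ≤
        c * ∫ x in {x : Fin n → ℝ | ∑ i, x i ^ 2 ≤ (n : ℝ) ^ 2}, f x ^ 2
              ∂(stdGaussianMeasure n) := by
  refine ⟨55, by norm_num, fun n f hf hhom hint => ?_⟩
  have hhom_sq : ∀ y, ENNReal.ofReal (f ((3 : ℝ) • y) ^ 2) = 9 * ENNReal.ofReal (f y ^ 2) := by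
    intro y
    rw [hhom 3 (by norm_num), mul_pow, ENNReal.ofReal_mul (by norm_num)]
    norm_num
  have hbound := lintegral_le_mul_setLIntegral_dimBall (by fun_prop) hhom_sq
    hint.lintegral_lt_top.ne
  have hf2 : 0 ≤ᵐ[stdGaussianMeasure n] fun x => f x ^ 2 := ae_of_all _ fun x => sq_nonneg _
  rw [integral_eq_lintegral_of_nonneg_ae hf2 (by fun_prop),
    integral_eq_lintegral_of_nonneg_ae (ae_restrict_of_ae hf2) (by fun_prop)]
  calc _ ≤ (55 * ∫⁻ x in dimBall n, ENNReal.ofReal (f x ^ 2) ∂stdGaussianMeasure n).toReal :=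
        ENNReal.toReal_mono (ENNReal.mul_ne_top (by simp) (ne_top_of_le_ne_top
          hint.lintegral_lt_top.ne (setLIntegral_le_lintegral _ _))) hbound
    _ = _ := by rw [ENNReal.toReal_mul, ENNReal.toReal_ofNat]; rfl
end

section
/- Let A and B be real symmetric n × n matrices with eigenvalues λ₁ ≥ ⋯ ≥ λₙ and μ₁ ≥ ⋯ ≥ μₙ respectively. Then for every orthogonal matrix U (in particular every permutation matrix σ), ⟨A, U B Uᵀ⟩ ≥ Σ_{i=1}^n λᵢ μ_{n+1−i}, where ⟨X, Y⟩ = Σ_{i,j} X_{ij} Y_{ij} = trace(XYᵀ). -/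
open Matrix

private lemma permEntry {n : ℕ} (σ : Equiv.Perm (Fin n)) (i j : Fin n) :
    (σ.permMatrix ℝ) i j = if σ i = j then 1 else 0 := by
  simp [Equiv.Perm.permMatrix, PEquiv.toMatrix_apply, Equiv.toPEquiv_apply, eq_comm]

theorem stmt18 (n : ℕ) (A B P Q U : Matrix (Fin n) (Fin n) ℝ)
    (hA : A.IsSymm) (hB : B.IsSymm)
    (lam mu : Fin n → ℝ) (hlam : Antitone lam) (hmu : Antitone mu)
    (hP : P * Pᵀ = 1) (hQ : Q * Qᵀ = 1)
    (hAd : A = P * Matrix.diagonal lam * Pᵀ)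
    (hBd : B = Q * Matrix.diagonal mu * Qᵀ)
    (hU : U * Uᵀ = 1) :
    ∑ i, lam i * mu (Fin.rev i) ≤ ∑ i, ∑ j, A i j * (U * B * Uᵀ) i j := by
  have hPt : Pᵀ * P = 1 := mul_eq_one_comm.mp hP
  set V : Matrix (Fin n) (Fin n) ℝ := Pᵀ * (U * Q) with hV
  have hVVt : V * Vᵀ = 1 := by
    have h1 : V * Vᵀ = Pᵀ * (U * ((Q * Qᵀ) * (Uᵀ * P))) := by
      simp [hV, Matrix.transpose_mul, Matrix.mul_assoc]
    rw [h1, hQ, Matrix.one_mul, ← Matrix.mul_assoc U, hU, Matrix.one_mul, hPt]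
  have hVtV : Vᵀ * V = 1 := mul_eq_one_comm.mp hVVt
  -- rewrite the RHS as ∑ i j, lam i * mu j * (V i j)^2
  have hRHS : ∑ i, ∑ j, A i j * (U * B * Uᵀ) i j
      = ∑ i, ∑ j, lam i * mu j * (V i j) ^ 2 := by
    have htr : ∑ i, ∑ j, A i j * (U * B * Uᵀ) i j
        = Matrix.trace (Matrix.diagonal lam * (V * (Matrix.diagonal mu * Vᵀ))) := by
      have h1 : ∑ i, ∑ j, A i j * (U * B * Uᵀ) i j = Matrix.trace (Aᵀ * (U * B * Uᵀ)) := by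
        simp [Matrix.trace, Matrix.diag, Matrix.mul_apply, Matrix.transpose_apply]
        exact Finset.sum_comm
      rw [h1, hA.eq, hAd, hBd]
      have h2 : (P * Matrix.diagonal lam * Pᵀ) * (U * (Q * Matrix.diagonal mu * Qᵀ) * Uᵀ)
          = P * (Matrix.diagonal lam * (V * (Matrix.diagonal mu * Vᵀ)) * Pᵀ) := by
        simp [hV, hP, Matrix.transpose_mul, Matrix.mul_assoc]
      rw [h2, Matrix.trace_mul_comm, Matrix.mul_assoc, hPt, Matrix.mul_one]
    rw [htr]
    simp only [Matrix.trace, Matrix.diag, Matrix.mul_apply, Matrix.transpose_apply,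
      Matrix.diagonal_apply, ite_mul, zero_mul, Finset.sum_ite_eq, Finset.mem_univ, if_true]
    refine Finset.sum_congr rfl fun i _ => ?_
    rw [Finset.mul_sum]
    refine Finset.sum_congr rfl fun j _ => ?_
    ring
  rw [hRHS]
  -- the matrix of squares is doubly stochastic
  set S : Matrix (Fin n) (Fin n) ℝ := Matrix.of fun i j => (V i j) ^ 2 with hS
  have hSmem : S ∈ doublyStochastic ℝ (Fin n) := by
    rw [mem_doublyStochastic_iff_sum]
    refine ⟨fun i j => sq_nonneg _, fun i => ?_, fun j => ?_⟩
    · have := congrFun (congrFun hVVt i) i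
      simpa [hS, Matrix.mul_apply, Matrix.one_apply, sq] using this
    · have := congrFun (congrFun hVtV j) j
      simpa [hS, Matrix.mul_apply, Matrix.one_apply, sq] using this
  obtain ⟨w, hw0, hw1, hwS⟩ := exists_eq_sum_perm_of_mem_doublyStochastic hSmem
  -- rearrangement bound for each permutation
  have hanti : Antivary lam (fun i => mu (Fin.rev i)) := by
    intro i j hij
    dsimp at hij
    have h : ¬ Fin.rev i ≤ Fin.rev j := fun h => not_le.mpr hij (hmu h)
    exact hlam (Fin.rev_lt_rev.mp (not_le.mp h)).le
  have hperm : ∀ σ : Equiv.Perm (Fin n),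
      ∑ i, lam i * mu (Fin.rev i) ≤ ∑ i, lam i * mu (σ i) := by
    intro σ
    have := hanti.sum_mul_le_sum_mul_comp_perm (σ := σ.trans Fin.revPerm)
    simpa [Fin.revPerm, Equiv.trans_apply] using this
  -- put it together
  have hsplit : ∑ i, ∑ j, lam i * mu j * S i j
      = ∑ σ : Equiv.Perm (Fin n), w σ * ∑ i, lam i * mu (σ i) := by
    rw [← hwS]
    have hentry : ∀ i j, (∑ σ : Equiv.Perm (Fin n), w σ • σ.permMatrix ℝ) i j
        = ∑ σ : Equiv.Perm (Fin n), w σ * (if σ i = j then 1 else 0) := by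
      intro i j
      simp [Matrix.sum_apply, Matrix.smul_apply, permEntry, mul_ite, Equiv.toPEquiv_apply]
    calc ∑ i, ∑ j, lam i * mu j * (∑ σ : Equiv.Perm (Fin n), w σ • σ.permMatrix ℝ) i j
        = ∑ i, ∑ j, ∑ σ : Equiv.Perm (Fin n),
            w σ * (lam i * mu j * (if σ i = j then 1 else 0)) := by
          refine Finset.sum_congr rfl fun i _ => Finset.sum_congr rfl fun j _ => ?_
          rw [hentry, Finset.mul_sum]
          exact Finset.sum_congr rfl fun σ _ => by ring
      _ = ∑ σ : Equiv.Perm (Fin n), ∑ i, ∑ j,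
            w σ * (lam i * mu j * (if σ i = j then 1 else 0)) := by
          rw [show (∑ i, ∑ j, ∑ σ : Equiv.Perm (Fin n),
              w σ * (lam i * mu j * (if σ i = j then 1 else 0)))
              = ∑ i, ∑ σ : Equiv.Perm (Fin n), ∑ j,
              w σ * (lam i * mu j * (if σ i = j then 1 else 0)) from
            Finset.sum_congr rfl fun i _ => Finset.sum_comm]
          exact Finset.sum_comm
      _ = ∑ σ : Equiv.Perm (Fin n), w σ * ∑ i, lam i * mu (σ i) := by
          refine Finset.sum_congr rfl fun σ _ => ?_
          rw [Finset.mul_sum]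
          refine Finset.sum_congr rfl fun i _ => ?_
          simp [mul_ite, Finset.sum_ite_eq]
  have hsum : ∑ i, ∑ j, lam i * mu j * (V i j) ^ 2 = ∑ i, ∑ j, lam i * mu j * S i j := rfl
  rw [hsum, hsplit]
  calc ∑ i, lam i * mu (Fin.rev i)
      = ∑ σ : Equiv.Perm (Fin n), w σ * ∑ i, lam i * mu (Fin.rev i) := by
        rw [← Finset.sum_mul, hw1, one_mul]
    _ ≤ ∑ σ : Equiv.Perm (Fin n), w σ * ∑ i, lam i * mu (σ i) := by
        exact Finset.sum_le_sum fun σ _ => mul_le_mul_of_nonneg_left (hperm σ) (hw0 σ)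
end

section
/- Let n = 2m be even, let J be the m × m all-ones matrix, and set A = [[1,1],[1,1]] ⊗ J and B = [[1,0],[0,−1]] ⊗ J (Kronecker products, so A and B are n × n). Then ⟨A, σ B σᵀ⟩ = 0 for every permutation matrix σ ∈ Sₙ, while there exist orthogonal matrices U with ⟨A, U B Uᵀ⟩ = −n²/2 and with ⟨A, U B Uᵀ⟩ = n²/2. -/
open Matrix Kronecker

lemma key19 (m : ℕ) (F : Matrix (Fin 2) (Fin 2) ℝ) :
    ∑ i : Fin 2 × Fin m, ∑ j : Fin 2 × Fin m,
      (F ⊗ₖ (Matrix.of fun _ _ => (1 : ℝ))) i j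
      = (m : ℝ) ^ 2 * (F 0 0 + F 0 1 + F 1 0 + F 1 1) := by
  simp [Fintype.sum_prod_type, Matrix.kroneckerMap_apply, Fin.sum_univ_two,
    Finset.sum_const, Finset.card_univ]
  ring

lemma conj19 (m : ℕ) (H : Matrix (Fin 2) (Fin 2) ℝ)
    (E : Matrix (Fin 2) (Fin 2) ℝ) (J : Matrix (Fin m) (Fin m) ℝ) :
    (H ⊗ₖ (1 : Matrix (Fin m) (Fin m) ℝ)) * (E ⊗ₖ J) *
      (H ⊗ₖ (1 : Matrix (Fin m) (Fin m) ℝ))ᵀ = (H * E * Hᵀ) ⊗ₖ J := by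
  rw [← Matrix.kroneckerMap_transpose, Matrix.transpose_one,
    ← Matrix.mul_kronecker_mul, ← Matrix.mul_kronecker_mul, Matrix.one_mul,
    Matrix.mul_one]


lemma tr19 (a b c d : ℝ) : (!![a, b; c, d])ᵀ = !![a, c; b, d] := by
  ext i j
  fin_cases i <;> fin_cases j <;> rfl

theorem stmt19 (m : ℕ)
    (J : Matrix (Fin m) (Fin m) ℝ) (hJ : J = Matrix.of fun _ _ => (1 : ℝ))
    (A B : Matrix (Fin 2 × Fin m) (Fin 2 × Fin m) ℝ)
    (hA : A = (!![1, 1; 1, 1] : Matrix (Fin 2) (Fin 2) ℝ) ⊗ₖ J)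
    (hB : B = (!![1, 0; 0, -1] : Matrix (Fin 2) (Fin 2) ℝ) ⊗ₖ J) :
    (∀ σ : Equiv.Perm (Fin 2 × Fin m),
      ∑ i, ∑ j, A i j * (σ.permMatrix ℝ * B * (σ.permMatrix ℝ)ᵀ) i j = 0) ∧
    (∃ U : Matrix (Fin 2 × Fin m) (Fin 2 × Fin m) ℝ, U * Uᵀ = 1 ∧
      ∑ i, ∑ j, A i j * (U * B * Uᵀ) i j = -((2 * m : ℝ) ^ 2) / 2) ∧
    (∃ U : Matrix (Fin 2 × Fin m) (Fin 2 × Fin m) ℝ, U * Uᵀ = 1 ∧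
      ∑ i, ∑ j, A i j * (U * B * Uᵀ) i j = (2 * m : ℝ) ^ 2 / 2) := by
  subst hJ
  have hone : ∀ i j : Fin 2 × Fin m, A i j = 1 := by
    rintro ⟨a, k⟩ ⟨b, l⟩
    rw [hA]
    fin_cases a <;> fin_cases b <;> simp [Matrix.kroneckerMap_apply]
  -- orthogonality of the rotation-type matrices
  set s : ℝ := (Real.sqrt 2)⁻¹ with hs_def
  have hs : s ^ 2 = 1 / 2 := by
    rw [hs_def, inv_pow, Real.sq_sqrt] <;> norm_num
  refine ⟨?_, ?_, ?_⟩
  · intro σ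
    have h1 : σ.permMatrix ℝ * B = B.submatrix σ id :=
      PEquiv.toMatrix_toPEquiv_mul σ B
    have h2 : (B.submatrix σ id) * (σ.permMatrix ℝ)ᵀ = B.submatrix σ σ := by
      rw [Equiv.Perm.permMatrix, ← PEquiv.toMatrix_symm, ← Equiv.toPEquiv_symm,
        PEquiv.mul_toMatrix_toPEquiv]
      rfl
    simp only [hone, one_mul]
    rw [h1, h2]
    have h3 : ∑ i, ∑ j, B.submatrix σ σ i j = ∑ i, ∑ j, B i j := by
      refine Fintype.sum_equiv σ _ _ fun i => ?_
      exact Fintype.sum_equiv σ _ _ fun j => rfl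
    rw [h3, hB, key19]
    norm_num
  · refine ⟨!![s, s; -s, s] ⊗ₖ (1 : Matrix (Fin m) (Fin m) ℝ), ?_, ?_⟩
    · rw [← Matrix.kroneckerMap_transpose, Matrix.transpose_one,
        ← Matrix.mul_kronecker_mul, Matrix.one_mul]
      have : !![s, s; -s, s] * !![s, s; -s, s]ᵀ = 1 := by
        rw [tr19]
        ext i j
        fin_cases i <;> fin_cases j <;>
          simp [Matrix.mul_apply, Fin.sum_univ_two, Matrix.transpose_apply, Matrix.one_apply] <;>
          nlinarith [hs]
      rw [this, Matrix.one_kronecker_one]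
    · rw [hB, conj19]
      have hF : !![s, s; -s, s] * !![1, 0; 0, -1] * !![s, s; -s, s]ᵀ
          = !![0, -1; -1, 0] := by
        rw [tr19]
        ext i j
        fin_cases i <;> fin_cases j <;>
          simp [Matrix.mul_apply, Fin.sum_univ_two, Matrix.transpose_apply] <;> nlinarith [hs]
      simp only [hone, one_mul, hF]
      rw [key19]
      norm_num
      ring
  · refine ⟨!![s, s; s, -s] ⊗ₖ (1 : Matrix (Fin m) (Fin m) ℝ), ?_, ?_⟩
    · rw [← Matrix.kroneckerMap_transpose, Matrix.transpose_one,
        ← Matrix.mul_kronecker_mul, Matrix.one_mul]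
      have : !![s, s; s, -s] * !![s, s; s, -s]ᵀ = 1 := by
        rw [tr19]
        ext i j
        fin_cases i <;> fin_cases j <;>
          simp [Matrix.mul_apply, Fin.sum_univ_two, Matrix.transpose_apply, Matrix.one_apply] <;>
          nlinarith [hs]
      rw [this, Matrix.one_kronecker_one]
    · rw [hB, conj19]
      have hF : !![s, s; s, -s] * !![1, 0; 0, -1] * !![s, s; s, -s]ᵀ
          = !![0, 1; 1, 0] := by
        rw [tr19]
        ext i j
        fin_cases i <;> fin_cases j <;>
          simp [Matrix.mul_apply, Fin.sum_univ_two, Matrix.transpose_apply] <;> nlinarith [hs]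
      simp only [hone, one_mul, hF]
      rw [key19]
      norm_num
      ring
end
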